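/- In the symmetric-algorithm setting, suppose the algorithm is (ε, ν)-stable for some ε ≥ 0 and ν ∈ (0,1), and suppose that, almost surely, the n+1 extended leave-one-out errors r̃_i = |Y_i − A_n((X_j, Y_j)_{j ∈ {1,...,n+1}, j ≠ i})(X_i)|, i ∈ {1, ..., n+1}, are pairwise distinct. Let α satisfy 1/(n+1) + √ν ≤ α < 1. Then P(|Y − f̂(X)| ≤ q_{n,α}{r_i} − ε) ≤ 1 − α + 1/(n + 1) + 2√ν. -/

import Mathlib

/-!
Call index `i` bad when the leave-one-out error `r_i` exceeds `r̃_i + ε`. By the triangle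
inequality this forces the fits on the data without `i`, with and without the test point, to
differ by more than `ε` at `X_i`; swapping point `i` with the test point turns this into the
stability event, so each index is bad with probability at most `ν`, and by Markov's inequality
more than `c = ⌊(n+1)√ν⌋` indices are bad with probability at most `√ν`. If there are only
`B ≤ c` bad indices, then `q_{n,α}{r_i}` is at most `ε` plus the `(k + B)`-th smallest of
`r̃_1, ..., r̃_n`, where `k = ⌈(1-α)(n+1)⌉`, so on the event the test point's `r̃` has rank at most
`k + c` among the `n + 1` distinct values `r̃_i`. By exchangeability every index is equally
likely to have rank at most `k + c`, so this has probability at most `(k + c)/(n+1)`.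
-/

open MeasureTheory ProbabilityTheory

/-- The `k`-th smallest value (1-indexed) among `v 0, ..., v (n-1)`. -/
noncomputable def kthSmallest {n : ℕ} (k : ℕ) (v : Fin n → ℝ) : ℝ :=
  (Multiset.sort (Multiset.map v Finset.univ.val) (· ≤ ·)).getD (k - 1) 0

/-- For `β ≥ 1/(n+1)`, `q_{n,β}{v}` is the `⌈(1 − β)(n + 1)⌉`-th smallest value among
`v 0, ..., v (n-1)`. -/
noncomputable def empQuantile {n : ℕ} (β : ℝ) (v : Fin n → ℝ) : ℝ :=
  kthSmallest ⌈(1 - β) * ((n:ℝ) + 1)⌉₊ v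

open Finset
open scoped ENNReal

theorem List.Pairwise.getElem_le_iff_lt_countP {α : Type*} [LinearOrder α] {l : List α}
    (hl : l.Pairwise (· ≤ ·)) {j : ℕ} (hj : j < l.length) (t : α) :
    l[j] ≤ t ↔ j < l.countP (· ≤ t) := by
  have hmono : ∀ i i' (hi : i < l.length) (hi' : i' < l.length), i ≤ i' → l[i] ≤ l[i'] :=
    fun i i' hi hi' hii' => hl.rel_get_of_le (a := ⟨i, hi⟩) (b := ⟨i', hi'⟩) (Fin.mk_le_mk.2 hii')
  constructor
  · intro h
    have hprefix : ∀ x ∈ l.take (j + 1), x ≤ t := by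
      intro x hx
      obtain ⟨i, hi, rfl⟩ := List.mem_take_iff_getElem.1 hx
      exact (hmono i j _ hj (by omega)).trans h
    calc j < (l.take (j + 1)).length := by rw [List.length_take]; omega
      _ = (l.take (j + 1)).countP (· ≤ t) := (List.countP_eq_length.2 (by simpa using hprefix)).symm
      _ ≤ l.countP (· ≤ t) := (List.take_sublist _ _).countP_le
  · intro h
    by_contra! hlt
    have hsuffix : ∀ x ∈ l.drop j, ¬ x ≤ t := by
      intro x hx
      obtain ⟨i, hi, rfl⟩ := List.mem_drop_iff_getElem.1 hx
      exact not_le.2 (hlt.trans_le (hmono j _ hj _ (by omega)))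
    rw [← List.take_append_drop j l, List.countP_append,
      (List.countP_eq_zero (l := l.drop j)).2 (by simpa using hsuffix), add_zero] at h
    exact h.not_ge (List.countP_le_length.trans (List.length_take_le _ _))

section OrderStatistics

variable {n : ℕ}

theorem empQuantile_eq_kthSmallest (β : ℝ) (v : Fin n → ℝ) :
    empQuantile β v = kthSmallest ⌈(1 - β) * ((n + 1 : ℕ) : ℝ)⌉₊ v := by
  rw [empQuantile, Nat.cast_succ]

theorem countP_sort_eq_card_filter (v : Fin n → ℝ) (p : ℝ → Prop) [DecidablePred p] :
    (Multiset.sort (Multiset.map v univ.val) (· ≤ ·)).countP (p ·) = #{i | p (v i)} := by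
  rw [← Multiset.coe_countP, Multiset.sort_eq, Multiset.countP_map, card_def, filter_val]

theorem kthSmallest_le_iff (v : Fin n → ℝ) {k : ℕ} (hk : 1 ≤ k) (hkn : k ≤ n) (t : ℝ) :
    kthSmallest k v ≤ t ↔ k ≤ #{i | v i ≤ t} := by
  set l := Multiset.sort (Multiset.map v univ.val) (· ≤ ·)
  have hlen : l.length = n := by simp [l]
  have hj : k - 1 < l.length := by omega
  rw [kthSmallest, List.getD_eq_getElem l 0 hj,
    (Multiset.pairwise_sort _ _).getElem_le_iff_lt_countP hj, countP_sort_eq_card_filter]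
  omega

theorem card_filter_lt_kthSmallest_lt (v : Fin n → ℝ) {k : ℕ} (hk : 1 ≤ k) (hkn : k ≤ n) :
    #{i | v i < kthSmallest k v} < k := by
  obtain hempty | ⟨i, hi, hmax⟩ :=
    (univ.filter fun i => v i < kthSmallest k v).eq_empty_or_nonempty.imp_right
      (exists_max_image _ v)
  · rw [hempty, card_empty]; omega
  · rw [mem_filter] at hi
    have hfew : #{j | v j ≤ v i} < k := by
      by_contra! h
      exact hi.2.not_ge ((kthSmallest_le_iff v hk hkn _).2 h)
    refine (card_le_card fun j hj => ?_).trans_lt hfew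
    rw [mem_filter] at hj ⊢
    exact ⟨hj.1, hmax j (mem_filter.2 hj)⟩

theorem kthSmallest_le_kthSmallest_add_card (v w : Fin n → ℝ) (ε : ℝ) {k B : ℕ} (hk : 1 ≤ k)
    (hkB : k + B ≤ n) (hB : #{i | w i + ε < v i} ≤ B) :
    kthSmallest k v ≤ kthSmallest (k + B) w + ε := by
  set t := kthSmallest (k + B) w
  have hw : k + B ≤ #{i | w i ≤ t} := (kthSmallest_le_iff w (by omega) hkB t).1 le_rfl
  have hgood : univ.filter (w · ≤ t) \ univ.filter (fun i => w i + ε < v i) ⊆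
      univ.filter (v · ≤ t + ε) := by
    intro i hi
    simp only [mem_sdiff, mem_filter, mem_univ, true_and, not_lt] at hi ⊢
    linarith
  rw [kthSmallest_le_iff v hk (by omega)]
  have := card_le_card_sdiff_add_card (s := ({i | w i ≤ t} : Finset (Fin n)))
    (t := {i | w i + ε < v i})
  have := card_le_card hgood
  omega

theorem card_filter_lt_lt_of_le_kthSmallest_sub {v w : Fin n → ℝ} {ε x : ℝ} {k B : ℕ}
    (hk : 1 ≤ k) (hx : x ≤ kthSmallest k v - ε) (hB : #{i | w i + ε < v i} ≤ B) :
    #{i | w i < x} < k + B := by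
  by_cases hkB : k + B ≤ n
  · have hshift := kthSmallest_le_kthSmallest_add_card v w ε hk hkB hB
    calc #{i | w i < x} ≤ #{i | w i < kthSmallest (k + B) w} :=
          card_le_card fun i hi => by
            rw [mem_filter] at hi ⊢
            exact ⟨hi.1, by linarith [hi.2]⟩
      _ < k + B := card_filter_lt_kthSmallest_lt w (by omega) hkB
  · calc #{i | w i < x} ≤ n := (card_filter_le _ _).trans_eq (card_fin n)
      _ < k + B := by omega

end OrderStatistics

section Rank

variable {ι : Type*} [Fintype ι]

noncomputable def rank (g : ι → ℝ) (i : ι) : ℕ := #{j | g j ≤ g i}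

theorem card_filter_rank_le_le (g : ι → ℝ) (K : ℕ) :
    #{i | rank g i ≤ K} ≤ K := by
  obtain hempty | ⟨i, hi, hmax⟩ :=
    (univ.filter fun i => rank g i ≤ K).eq_empty_or_nonempty.imp_right (exists_max_image _ g)
  · simp [hempty]
  · calc #{i | rank g i ≤ K} ≤ rank g i :=
          card_le_card fun j hj => mem_filter.2 ⟨mem_univ _, hmax j hj⟩
      _ ≤ K := (mem_filter.1 hi).2

theorem rank_comp_perm (g : ι → ℝ) (σ : Equiv.Perm ι) (i : ι) :
    rank (g ∘ σ) i = rank g (σ i) := by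
  simp only [rank, card_filter, Function.comp_apply]
  exact Equiv.sum_comp σ (fun j => if g j ≤ g (σ i) then 1 else 0)

theorem rank_last {n : ℕ} {F : Fin (n + 1) → ℝ} (hF : Function.Injective F) :
    rank F (Fin.last n) = #{i : Fin n | F i.castSucc < F (Fin.last n)} + 1 := by
  have hne : ∀ i : Fin n, F i.castSucc ≠ F (Fin.last n) :=
    fun i h => (Fin.castSucc_lt_last i).ne (hF h)
  simp only [rank, card_filter, Fin.sum_univ_castSucc, le_refl, if_true]
  congr 1
  exact sum_congr rfl fun i _ => by simp [le_iff_lt_or_eq, hne i]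

theorem rank_last_le_of_le_kthSmallest_sub {n : ℕ} {F : Fin (n + 1) → ℝ} {g : Fin n → ℝ}
    {ε : ℝ} {k B : ℕ} (hF : Function.Injective F) (hk : 1 ≤ k)
    (hlast : F (Fin.last n) ≤ kthSmallest k g - ε) (hB : #{i | F i.castSucc + ε < g i} ≤ B) :
    rank F (Fin.last n) ≤ k + B := by
  rw [rank_last hF]
  exact card_filter_lt_lt_of_le_kthSmallest_sub hk hlast hB

end Rank

section CountingEvents

variable {V : Type*} [MeasurableSpace V] {ι : Type*} [Fintype ι] {A : ι → Set V}
  [∀ v, DecidablePred fun i => v ∈ A i]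

theorem measurable_card_filter_mem (hA : ∀ i, MeasurableSet (A i)) :
    Measurable fun v => #{i | v ∈ A i} := by
  simp only [card_filter]
  exact Finset.measurable_sum _ fun i _ => Measurable.ite (hA i) measurable_const measurable_const

theorem lintegral_card_filter_mem (μ : Measure V) (hA : ∀ i, MeasurableSet (A i)) :
    ∫⁻ v, (#{i | v ∈ A i} : ℝ≥0∞) ∂μ = ∑ i, μ (A i) := by
  have hind : ∀ v, (#{i | v ∈ A i} : ℝ≥0∞) = ∑ i, (A i).indicator 1 v := by
    intro v
    simp only [card_filter, Nat.cast_sum]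
    exact sum_congr rfl fun i _ => by by_cases h : v ∈ A i <;> simp [h]
  simp_rw [hind]
  rw [lintegral_finsetSum _ fun i _ => measurable_one.indicator (hA i)]
  exact sum_congr rfl fun i _ => lintegral_indicator_one (hA i)

theorem measure_floor_lt_card_filter_mem_le (μ : Measure V) (hA : ∀ i, MeasurableSet (A i))
    {ν : ℝ} (hν : ∀ i, μ (A i) ≤ ENNReal.ofReal ν) :
    μ {v | ⌊((Fintype.card ι : ℝ) + 1) * √ν⌋₊ < #{i | v ∈ A i}} ≤ ENNReal.ofReal √ν := by
  set c := ⌊((Fintype.card ι : ℝ) + 1) * √ν⌋₊ + 1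
  have hset : {v | ⌊((Fintype.card ι : ℝ) + 1) * √ν⌋₊ < #{i | v ∈ A i}} =
      {v | (c : ℝ≥0∞) ≤ #{i | v ∈ A i}} := by
    ext v
    simp only [Set.mem_ofPred_eq, Nat.cast_le, c, Nat.lt_iff_add_one_le]
  have hmarkov : (c : ℝ≥0∞) * μ {v | (c : ℝ≥0∞) ≤ #{i | v ∈ A i}} ≤ ∑ i, μ (A i) :=
    lintegral_card_filter_mem μ hA ▸ mul_meas_ge_le_lintegral₀
      (measurable_from_top.comp (measurable_card_filter_mem hA)).aemeasurable _
  have hsum : ∑ i, μ (A i) ≤ c * ENNReal.ofReal √ν := by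
    calc ∑ i, μ (A i) ≤ Fintype.card ι * ENNReal.ofReal ν :=
          (sum_le_sum fun i _ => hν i).trans_eq (by rw [sum_const, card_univ, nsmul_eq_mul])
      _ ≤ c * ENNReal.ofReal √ν := by
          rw [← ENNReal.ofReal_natCast, ← ENNReal.ofReal_natCast,
            ← ENNReal.ofReal_mul (by positivity), ← ENNReal.ofReal_mul (by positivity)]
          refine ENNReal.ofReal_le_ofReal ?_
          have hc : ((Fintype.card ι : ℝ) + 1) * √ν < c := by
            simpa [c] using Nat.lt_floor_add_one (((Fintype.card ι : ℝ) + 1) * √ν)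
          rcases le_or_gt ν 0 with hν0 | hν0
          · nlinarith [Real.sqrt_nonneg ν, (Nat.cast_nonneg c : (0 : ℝ) ≤ c)]
          · nlinarith [Real.mul_self_sqrt hν0.le, Real.sqrt_nonneg ν]
  rw [hset]
  exact (ENNReal.mul_le_mul_iff_right (by simp [c]) (ENNReal.natCast_ne_top c)).1
    (hmarkov.trans hsum)

end CountingEvents

section Exchangeable

variable {ι β : Type*} [Fintype ι] [MeasurableSpace β]

theorem measurePreserving_comp_perm_map_of_iIndepFun {Ω : Type*} [MeasurableSpace Ω]
    {P : Measure Ω} {Z : ι → Ω → β} (hZ : ∀ i, Measurable (Z i)) (hind : iIndepFun Z P) {i₀ : ι}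
    (hident : ∀ i, IdentDistrib (Z i) (Z i₀) P P) (σ : Equiv.Perm ι) :
    MeasurePreserving (fun v : ι → β => v ∘ σ) (P.map fun ω i => Z i ω)
      (P.map fun ω i => Z i ω) := by
  have hpi : ∀ τ : Equiv.Perm ι,
      P.map (fun ω i => Z (τ i) ω) = Measure.pi fun _ => P.map (Z i₀) := fun τ => by
    rw [(hind.precomp τ.injective).map_fun_eq_pi_map fun i => (hZ _).aemeasurable]
    simp_rw [(hident _).map_eq]
  have hcomp : Measurable fun v : ι → β => v ∘ σ :=
    measurable_pi_lambda _ fun i => measurable_pi_apply _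
  refine ⟨hcomp, ?_⟩
  rw [Measure.map_map hcomp (measurable_pi_lambda _ hZ)]
  exact (hpi σ).trans (hpi (Equiv.refl ι)).symm

theorem measurableSet_rank_le {T : (ι → β) → ι → ℝ} (hT : ∀ i, Measurable fun v => T v i)
    (i : ι) (K : ℕ) : MeasurableSet {v | rank (T v) i ≤ K} :=
  measurable_card_filter_mem (A := fun j => {v | T v j ≤ T v i})
    (fun j => measurableSet_le (hT j) (hT i)) measurableSet_Iic

theorem measure_rank_le_le {μ : Measure (ι → β)} [IsProbabilityMeasure μ]
    (hμ : ∀ σ : Equiv.Perm ι, MeasurePreserving (fun v => v ∘ σ) μ μ)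
    {T : (ι → β) → ι → ℝ} (hT : ∀ i, Measurable fun v => T v i)
    (hTσ : ∀ (σ : Equiv.Perm ι) v, T (v ∘ σ) = T v ∘ σ) (i₀ : ι) (K : ℕ) :
    μ {v | rank (T v) i₀ ≤ K} ≤ K / Fintype.card ι := by
  classical
  have hswap : ∀ i, μ {v | rank (T v) i ≤ K} = μ {v | rank (T v) i₀ ≤ K} := fun i => by
    rw [← (hμ (Equiv.swap i₀ i)).measure_preimage
      (measurableSet_rank_le hT i₀ K).nullMeasurableSet]
    congr 1
    ext v
    simp [hTσ, rank_comp_perm]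
  have hsum : ∑ i, μ {v | rank (T v) i ≤ K} ≤ K := by
    rw [← lintegral_card_filter_mem μ fun i => measurableSet_rank_le hT i K]
    refine (lintegral_mono (g := fun _ => (K : ℝ≥0∞)) fun v => ?_).trans_eq (by simp)
    simpa using card_filter_rank_le_le (T v) K
  have hcard : (Fintype.card ι : ℝ≥0∞) ≠ 0 := by
    simpa using (Fintype.card_pos_iff.2 ⟨i₀⟩).ne'
  rw [ENNReal.le_div_iff_mul_le (Or.inl hcard) (Or.inl (ENNReal.natCast_ne_top _)), mul_comm]
  simpa [hswap, sum_const, card_univ, nsmul_eq_mul] using hsum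

end Exchangeable

theorem exists_perm_eq_succAbove_comp {n : ℕ} {f : Fin n → Fin (n + 1)}
    (hf : Function.Injective f) {p : Fin (n + 1)} (hp : ∀ j, f j ≠ p) :
    ∃ π : Equiv.Perm (Fin n), f = p.succAbove ∘ π := by
  choose g hg using fun j => Fin.exists_succAbove_eq (hp j)
  have hinj : Function.Injective g := fun a b hab => hf (by rw [← hg a, ← hg b, hab])
  exact ⟨Equiv.ofBijective g (Finite.injective_iff_bijective.1 hinj), funext fun j => (hg j).symm⟩

section Jackknife

variable {𝒳 : Type*} {N : ℕ}

-- With `v (Fin.last _)` the test point: `extErr An v i` is the paper's `r̃_i`, `looErr Am v i`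
-- is `r_i`, and `stabGap An Am v i` is `|f̂(X) - f̂^{-i}(X)|`.
noncomputable def extErr (An : (Fin N → 𝒳 × ℝ) → 𝒳 → ℝ) (v : Fin (N + 1) → 𝒳 × ℝ)
    (i : Fin (N + 1)) : ℝ :=
  |(v i).2 - An (fun k => v (i.succAbove k)) (v i).1|

noncomputable def looErr (Am : (Fin N → 𝒳 × ℝ) → 𝒳 → ℝ) (v : Fin (N + 2) → 𝒳 × ℝ)
    (i : Fin (N + 1)) : ℝ :=
  |(v i.castSucc).2 - Am (fun j => v (i.succAbove j).castSucc) (v i.castSucc).1|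

noncomputable def stabGap (An : (Fin (N + 1) → 𝒳 × ℝ) → 𝒳 → ℝ)
    (Am : (Fin N → 𝒳 × ℝ) → 𝒳 → ℝ) (v : Fin (N + 2) → 𝒳 × ℝ) (i : Fin (N + 1)) : ℝ :=
  |An (fun j => v j.castSucc) (v (Fin.last _)).1
    - Am (fun j => v (i.succAbove j).castSucc) (v (Fin.last _)).1|

theorem extErr_last (An : (Fin N → 𝒳 × ℝ) → 𝒳 → ℝ) (v : Fin (N + 1) → 𝒳 × ℝ) :
    extErr An v (Fin.last N) =
      |(v (Fin.last N)).2 - An (fun j => v j.castSucc) (v (Fin.last N)).1| := by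
  simp only [extErr, Fin.succAbove_last]

theorem extErr_comp_perm {An : (Fin N → 𝒳 × ℝ) → 𝒳 → ℝ}
    (hAn : ∀ σ : Equiv.Perm (Fin N), ∀ D, An (D ∘ σ) = An D)
    (σ : Equiv.Perm (Fin (N + 1))) (v : Fin (N + 1) → 𝒳 × ℝ) :
    extErr An (v ∘ σ) = extErr An v ∘ σ := by
  funext i
  obtain ⟨π, hπ⟩ := exists_perm_eq_succAbove_comp
    (σ.injective.comp Fin.succAbove_right_injective) (p := σ i) fun k h =>
      Fin.succAbove_ne i k (σ.injective h)
  have hdata : (fun k => v (σ (i.succAbove k))) = (fun k => v ((σ i).succAbove k)) ∘ π :=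
    funext fun k => congrArg v (congrFun hπ k)
  simp only [extErr, Function.comp_apply]
  rw [hdata, hAn]

theorem stabGap_comp_swap {An : (Fin (N + 1) → 𝒳 × ℝ) → 𝒳 → ℝ}
    (hAn : ∀ σ : Equiv.Perm (Fin (N + 1)), ∀ D, An (D ∘ σ) = An D)
    (Am : (Fin N → 𝒳 × ℝ) → 𝒳 → ℝ) (v : Fin (N + 2) → 𝒳 × ℝ) (i : Fin (N + 1)) :
    stabGap An Am (v ∘ Equiv.swap i.castSucc (Fin.last _)) i =
      |An (fun k => v (i.castSucc.succAbove k)) (v i.castSucc).1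
        - Am (fun j => v (i.succAbove j).castSucc) (v i.castSucc).1| := by
  set τ := Equiv.swap i.castSucc (Fin.last (N + 1))
  obtain ⟨π, hπ⟩ := exists_perm_eq_succAbove_comp
    (τ.injective.comp (Fin.castSucc_injective _)) (p := i.castSucc) fun j h =>
      (Fin.castSucc_lt_last j).ne (τ.injective (h.trans (Equiv.swap_apply_right _ _).symm))
  have htrain : (fun j => v (τ j.castSucc)) = (fun k => v (i.castSucc.succAbove k)) ∘ π :=
    funext fun j => congrArg v (congrFun hπ j)
  have hfixed : ∀ j, τ (i.succAbove j).castSucc = (i.succAbove j).castSucc := fun j =>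
    Equiv.swap_apply_of_ne_of_ne (fun h => Fin.succAbove_ne i j (Fin.castSucc_injective _ h))
      (Fin.castSucc_lt_last _).ne
  have hlast : τ (Fin.last (N + 1)) = i.castSucc := Equiv.swap_apply_right _ _
  simp only [stabGap, Function.comp_apply, hfixed, hlast]
  rw [htrain, hAn]

theorem looErr_le_extErr_add_stabGap {An : (Fin (N + 1) → 𝒳 × ℝ) → 𝒳 → ℝ}
    (hAn : ∀ σ : Equiv.Perm (Fin (N + 1)), ∀ D, An (D ∘ σ) = An D)
    (Am : (Fin N → 𝒳 × ℝ) → 𝒳 → ℝ) (v : Fin (N + 2) → 𝒳 × ℝ) (i : Fin (N + 1)) :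
    looErr Am v i ≤
      extErr An v i.castSucc + stabGap An Am (v ∘ Equiv.swap i.castSucc (Fin.last _)) i := by
  rw [stabGap_comp_swap hAn]
  exact abs_sub_le _ _ _

variable [MeasurableSpace 𝒳] {An : (Fin (N + 1) → 𝒳 × ℝ) → 𝒳 → ℝ}
  {Am : (Fin N → 𝒳 × ℝ) → 𝒳 → ℝ}

theorem measurable_extErr (hAn : Measurable fun p : (Fin (N + 1) → 𝒳 × ℝ) × 𝒳 => An p.1 p.2)
    (i : Fin (N + 2)) : Measurable fun v => extErr An v i := by
  have hdata : Measurable fun v : Fin (N + 2) → 𝒳 × ℝ =>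
      (fun k => v (i.succAbove k), (v i).1) := by
    fun_prop
  exact ((measurable_pi_apply i).snd.sub (hAn.comp hdata)).abs

theorem measurable_looErr (hAm : Measurable fun p : (Fin N → 𝒳 × ℝ) × 𝒳 => Am p.1 p.2)
    (i : Fin (N + 1)) : Measurable fun v => looErr Am v i := by
  have hdata : Measurable fun v : Fin (N + 2) → 𝒳 × ℝ =>
      (fun j => v (i.succAbove j).castSucc, (v i.castSucc).1) := by
    fun_prop
  exact ((measurable_pi_apply _).snd.sub (hAm.comp hdata)).abs

theorem measurable_stabGap (hAn : Measurable fun p : (Fin (N + 1) → 𝒳 × ℝ) × 𝒳 => An p.1 p.2)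
    (hAm : Measurable fun p : (Fin N → 𝒳 × ℝ) × 𝒳 => Am p.1 p.2) (i : Fin (N + 1)) :
    Measurable fun v => stabGap An Am v i := by
  have htrain : Measurable fun v : Fin (N + 2) → 𝒳 × ℝ =>
      (fun j : Fin (N + 1) => v j.castSucc, (v (Fin.last _)).1) := by
    fun_prop
  have hloo : Measurable fun v : Fin (N + 2) → 𝒳 × ℝ =>
      (fun j => v (i.succAbove j).castSucc, (v (Fin.last _)).1) := by
    fun_prop
  exact ((hAn.comp htrain).sub (hAm.comp hloo)).abs

theorem measure_extErr_add_lt_looErr_le {μ : Measure (Fin (N + 2) → 𝒳 × ℝ)}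
    (hμ : ∀ σ : Equiv.Perm (Fin (N + 2)), MeasurePreserving (fun v => v ∘ σ) μ μ)
    (hAnMeas : Measurable fun p : (Fin (N + 1) → 𝒳 × ℝ) × 𝒳 => An p.1 p.2)
    (hAmMeas : Measurable fun p : (Fin N → 𝒳 × ℝ) × 𝒳 => Am p.1 p.2)
    (hAn : ∀ σ : Equiv.Perm (Fin (N + 1)), ∀ D, An (D ∘ σ) = An D) (ε : ℝ) (i : Fin (N + 1)) :
    μ {v | extErr An v i.castSucc + ε < looErr Am v i} ≤ μ {v | ε < stabGap An Am v i} := by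
  set τ := Equiv.swap i.castSucc (Fin.last (N + 1))
  calc μ {v | extErr An v i.castSucc + ε < looErr Am v i}
      ≤ μ ((fun v => v ∘ τ) ⁻¹' {v | ε < stabGap An Am v i}) := measure_mono fun v hv => by
        have := looErr_le_extErr_add_stabGap hAn Am v i
        simp only [Set.mem_preimage, Set.mem_ofPred_eq] at hv ⊢
        linarith
    _ = μ {v | ε < stabGap An Am v i} := (hμ τ).measure_preimage
        (measurableSet_lt measurable_const (measurable_stabGap hAnMeas hAmMeas i)).nullMeasurableSet

theorem measure_floor_lt_card_extErr_add_lt_looErr_le {μ : Measure (Fin (N + 2) → 𝒳 × ℝ)}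
    (hμ : ∀ σ : Equiv.Perm (Fin (N + 2)), MeasurePreserving (fun v => v ∘ σ) μ μ)
    (hAnMeas : Measurable fun p : (Fin (N + 1) → 𝒳 × ℝ) × 𝒳 => An p.1 p.2)
    (hAmMeas : Measurable fun p : (Fin N → 𝒳 × ℝ) × 𝒳 => Am p.1 p.2)
    (hAn : ∀ σ : Equiv.Perm (Fin (N + 1)), ∀ D, An (D ∘ σ) = An D) {ε ν : ℝ}
    (hstab : ∀ i, μ {v | ε < stabGap An Am v i} ≤ ENNReal.ofReal ν) :
    μ {v | ⌊((N + 2 : ℕ) : ℝ) * √ν⌋₊ < #{i | extErr An v i.castSucc + ε < looErr Am v i}} ≤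
      ENNReal.ofReal √ν := by
  have := measure_floor_lt_card_filter_mem_le μ
    (A := fun i => {v | extErr An v i.castSucc + ε < looErr Am v i})
    (fun i => measurableSet_lt ((measurable_extErr hAnMeas _).add_const ε)
      (measurable_looErr hAmMeas i))
    fun i => (measure_extErr_add_lt_looErr_le hμ hAnMeas hAmMeas hAn ε i).trans (hstab i)
  rwa [show (Fintype.card (Fin (N + 1)) : ℝ) + 1 = ((N + 2 : ℕ) : ℝ) by simp; ring] at this

end Jackknife

theorem ofReal_sqrt_add_ceil_add_floor_div_le {n : ℕ} (hn : 0 < n) {α ν : ℝ} (hα : α < 1) :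
    ENNReal.ofReal √ν + ((⌈(1 - α) * n⌉₊ + ⌊n * √ν⌋₊ : ℕ) : ℝ≥0∞) / n ≤
      ENNReal.ofReal (1 - α + 1 / n + 2 * √ν) := by
  have hn' : (0 : ℝ) < n := Nat.cast_pos.2 hn
  have hk := Nat.ceil_lt_add_one (by nlinarith : 0 ≤ (1 - α) * n)
  have hc := Nat.floor_le (by positivity : 0 ≤ n * √ν)
  rw [← ENNReal.ofReal_natCast, ← ENNReal.ofReal_natCast n, ← ENNReal.ofReal_div_of_pos hn',
    ← ENNReal.ofReal_add (Real.sqrt_nonneg ν) (by positivity)]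
  refine ENNReal.ofReal_le_ofReal ?_
  have : ((⌈(1 - α) * n⌉₊ + ⌊n * √ν⌋₊ : ℕ) : ℝ) / n ≤ 1 - α + 1 / n + √ν := by
    rw [div_le_iff₀ hn', add_mul, add_mul, one_div_mul_cancel hn'.ne']
    push_cast
    nlinarith
  linarith

theorem stmt18_general {𝒳 : Type*} [MeasurableSpace 𝒳]
    {Ω : Type*} [MeasurableSpace Ω] (P : Measure Ω) [IsProbabilityMeasure P]
    (m : ℕ)
    (An : (Fin (m+1) → 𝒳 × ℝ) → 𝒳 → ℝ)
    (Am : (Fin m → 𝒳 × ℝ) → 𝒳 → ℝ)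
    (hAnMeas : Measurable (fun p : (Fin (m+1) → 𝒳 × ℝ) × 𝒳 => An p.1 p.2))
    (hAmMeas : Measurable (fun p : (Fin m → 𝒳 × ℝ) × 𝒳 => Am p.1 p.2))
    (hAnSymm : ∀ σ : Equiv.Perm (Fin (m+1)), ∀ D, An (D ∘ σ) = An D)
    (Z : Fin (m+2) → Ω → 𝒳 × ℝ)
    (hZmeas : ∀ i, Measurable (Z i))
    (hindep : iIndepFun Z P)
    (hident : ∀ i, IdentDistrib (Z i) (Z 0) P P)
    (ε ν : ℝ)
    (hstable : ∀ i : Fin (m+1),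
      P {ω | ε <
          |An (fun j : Fin (m+1) => Z j.castSucc ω) ((Z (Fin.last (m+1)) ω).1)
            - Am (fun j : Fin m => Z ((i.succAbove j).castSucc) ω)
                ((Z (Fin.last (m+1)) ω).1)|}
        ≤ ENNReal.ofReal ν)
    (hdistinct : ∀ᵐ ω ∂P, ∀ i j : Fin (m+2), i ≠ j →
      |(Z i ω).2 - An (fun k : Fin (m+1) => Z (i.succAbove k) ω) ((Z i ω).1)|
        ≠ |(Z j ω).2 - An (fun k : Fin (m+1) => Z (j.succAbove k) ω) ((Z j ω).1)|)
    (α : ℝ) (hα2 : α < 1) :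
    (P {ω |
        |(Z (Fin.last (m+1)) ω).2
            - An (fun j : Fin (m+1) => Z j.castSucc ω) ((Z (Fin.last (m+1)) ω).1)|
          ≤ empQuantile α
              (fun i : Fin (m+1) =>
                |(Z i.castSucc ω).2
                  - Am (fun j : Fin m => Z ((i.succAbove j).castSucc) ω)
                      ((Z i.castSucc ω).1)|)
            - ε}).toReal
      ≤ 1 - α + 1/((m:ℝ)+2) + 2 * Real.sqrt ν := by
  set Zv : Ω → Fin (m + 2) → 𝒳 × ℝ := fun ω i => Z i ω
  have hZv : Measurable Zv := measurable_pi_lambda _ hZmeas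
  have := Measure.isProbabilityMeasure_map (μ := P) hZv.aemeasurable
  have hμ := measurePreserving_comp_perm_map_of_iIndepFun hZmeas hindep hident
  have hstab : ∀ i, P.map Zv {v | ε < stabGap An Am v i} ≤ ENNReal.ofReal ν := fun i => by
    rw [Measure.map_apply hZv (measurableSet_lt measurable_const
      (measurable_stabGap hAnMeas hAmMeas i))]
    exact hstable i
  set k := ⌈(1 - α) * ((m + 2 : ℕ) : ℝ)⌉₊
  set c := ⌊((m + 2 : ℕ) : ℝ) * √ν⌋₊
  refine ENNReal.toReal_le_of_le_ofReal (by positivity) ((measure_mono_ae (t := Zv ⁻¹'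
    ({v | c < #{i | extErr An v i.castSucc + ε < looErr Am v i}} ∪
      {v | rank (extErr An v) (Fin.last _) ≤ k + c})) ?_).trans ?_)
  · filter_upwards [hdistinct] with ω hω hEω
    refine or_iff_not_imp_left.2 fun hB => rank_last_le_of_le_kthSmallest_sub
      (Function.injective_iff_pairwise_ne.2 hω) (Nat.ceil_pos.2 (by positivity)) ?_ (not_lt.1 hB)
    rw [extErr_last, ← empQuantile_eq_kthSmallest]
    exact hEω
  · calc P (Zv ⁻¹' _) ≤ P.map Zv _ := Measure.le_map_apply hZv.aemeasurable _
      _ ≤ P.map Zv _ + P.map Zv _ := measure_union_le _ _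
      _ ≤ ENNReal.ofReal √ν + ((k + c : ℕ) : ℝ≥0∞) / Fintype.card (Fin (m + 2)) :=
        add_le_add
          (measure_floor_lt_card_extErr_add_lt_looErr_le hμ hAnMeas hAmMeas hAnSymm hstab)
          (measure_rank_le_le hμ (measurable_extErr hAnMeas) (extErr_comp_perm hAnSymm) _ _)
      _ ≤ ENNReal.ofReal (1 - α + 1 / ((m : ℝ) + 2) + 2 * √ν) := by
        have h := ofReal_sqrt_add_ceil_add_floor_div_le (n := m + 2) (by omega) (ν := ν) hα2
        rw [Fintype.card_fin]
        convert h using 4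
        push_cast
        ring

/-- **jackknife coverage upper bound for stable symmetric algorithms.**
Same setting as Statement 17: `n = m + 1 ≥ 2` training points `Z i.castSucc` and a test
point `(X, Y) = Z (last)`, all i.i.d.; `An`/`Am` a symmetric, jointly measurable algorithm;
`(ε, ν)`-stability holds. Additionally assume that, almost surely, the `n + 1` extended
leave-one-out errors `r̃ i = |(Z i).2 − An (data without i) ((Z i).1)|`, `i : Fin (m+2)`,
are pairwise distinct. Then for `1/(n+1) + √ν ≤ α < 1`,
`P(|Y − f̂(X)| ≤ q_{n,α}{r i} − ε) ≤ 1 − α + 1/(n + 1) + 2√ν`. -/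
theorem stmt18 {𝒳 : Type*} [MeasurableSpace 𝒳]
    {Ω : Type*} [MeasurableSpace Ω] (P : Measure Ω) [IsProbabilityMeasure P]
    (m : ℕ) (hm : 1 ≤ m)
    (An : (Fin (m+1) → 𝒳 × ℝ) → 𝒳 → ℝ)
    (Am : (Fin m → 𝒳 × ℝ) → 𝒳 → ℝ)
    (hAnMeas : Measurable (fun p : (Fin (m+1) → 𝒳 × ℝ) × 𝒳 => An p.1 p.2))
    (hAmMeas : Measurable (fun p : (Fin m → 𝒳 × ℝ) × 𝒳 => Am p.1 p.2))
    (hAnSymm : ∀ σ : Equiv.Perm (Fin (m+1)), ∀ D, An (D ∘ σ) = An D)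
    (hAmSymm : ∀ σ : Equiv.Perm (Fin m), ∀ D, Am (D ∘ σ) = Am D)
    (Z : Fin (m+2) → Ω → 𝒳 × ℝ)
    (hZmeas : ∀ i, Measurable (Z i))
    (hindep : iIndepFun Z P)
    (hident : ∀ i, IdentDistrib (Z i) (Z 0) P P)
    (ε ν : ℝ) (hε : 0 ≤ ε) (hν : ν ∈ Set.Ioo (0:ℝ) 1)
    (hstable : ∀ i : Fin (m+1),
      P {ω | ε <
          |An (fun j : Fin (m+1) => Z j.castSucc ω) ((Z (Fin.last (m+1)) ω).1)
            - Am (fun j : Fin m => Z ((i.succAbove j).castSucc) ω)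
                ((Z (Fin.last (m+1)) ω).1)|}
        ≤ ENNReal.ofReal ν)
    (hdistinct : ∀ᵐ ω ∂P, ∀ i j : Fin (m+2), i ≠ j →
      |(Z i ω).2 - An (fun k : Fin (m+1) => Z (i.succAbove k) ω) ((Z i ω).1)|
        ≠ |(Z j ω).2 - An (fun k : Fin (m+1) => Z (j.succAbove k) ω) ((Z j ω).1)|)
    (α : ℝ) (hα1 : 1/((m:ℝ)+2) + Real.sqrt ν ≤ α) (hα2 : α < 1) :
    (P {ω |
        |(Z (Fin.last (m+1)) ω).2
            - An (fun j : Fin (m+1) => Z j.castSucc ω) ((Z (Fin.last (m+1)) ω).1)|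
          ≤ empQuantile α
              (fun i : Fin (m+1) =>
                |(Z i.castSucc ω).2
                  - Am (fun j : Fin m => Z ((i.succAbove j).castSucc) ω)
                      ((Z i.castSucc ω).1)|)
            - ε}).toReal
      ≤ 1 - α + 1/((m:ℝ)+2) + 2 * Real.sqrt ν :=
  stmt18_general P m An Am hAnMeas hAmMeas hAnSymm Z hZmeas hindep hident ε ν hstable hdistinct α
    hα2
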